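/- arXiv:2405.03469 — 3 statements merged into one kernel-verified Lean document; each statement's English description precedes it below -/
import Mathlib

section
/- Let β > 0 and define y : (0,∞) → ℝ by y(x) := √x · K(1/(β+2), (2/(β+2))·x^((β+2)/2)), where K(ν,z) := ∫₀^∞ exp(−z·cosh t)·cosh(ν·t) dt. Then for every x > 0, y′(x) = −x^((β+1)/2) · K((β+1)/(β+2), (2/(β+2))·x^((β+2)/2)). -/
/-!
Differentiating under the integral sign gives
`∂_z K(ν, z) = -∫ exp(-z cosh t) cosh t cosh(νt) dt`; this is legitimate because
`cosh t ≥ t² / 4`, so the kernel has Gaussian decay, which dominates the exponential growth of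
the hyperbolic factors. Writing `cosh t cosh(νt) = cosh((ν-1)t) + sinh t sinh(νt)` and integrating
the last term by parts (`-z sinh t exp(-z cosh t)` is the derivative of the kernel) yields
`∂_z K(ν, z) = -K(ν-1, z) - (ν/z) K(ν, z)`. For `ν = 1/(β+2)` and `z = 2ν x^{1/(2ν)}`
the term `-(ν/z) K(ν, z)` exactly cancels the derivative of `√x`, and `K(ν-1, z) = K(1-ν, z)`
since `K` is even in `ν`.
-/

open Set

/-- Modified Bessel function of the second kind (integral representation):
`K(ν, z) = ∫₀^∞ exp(−z cosh t) cosh(ν t) dt`. -/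
noncomputable def besselK (ν z : ℝ) : ℝ :=
  ∫ t in Set.Ioi (0 : ℝ), Real.exp (-z * Real.cosh t) * Real.cosh (ν * t)

open MeasureTheory Filter Real Topology

lemma abs_cosh_le_exp_abs (x : ℝ) : |cosh x| ≤ exp |x| := by
  rw [abs_of_pos (cosh_pos x), cosh_eq]
  linarith [exp_le_exp.2 (le_abs_self x), exp_le_exp.2 (neg_le_abs x)]

lemma abs_sinh_le_exp_abs (x : ℝ) : |sinh x| ≤ exp |x| := by
  calc |sinh x| = sinh |x| := abs_sinh x
    _ ≤ |cosh x| := (sinh_lt_cosh _).le.trans (cosh_abs x ▸ le_abs_self _)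
    _ ≤ exp |x| := abs_cosh_le_exp_abs x

lemma mul_sub_mul_cosh_le {z : ℝ} (hz : 0 < z) (a : ℝ) {t : ℝ} (ht : 0 ≤ t) :
    a * t - z * cosh t ≤ 2 * a ^ 2 / z - z / 8 * t ^ 2 := by
  have hcosh : t ^ 2 / 4 ≤ cosh t := by
    rw [cosh_eq]
    linarith [quadratic_le_exp_of_nonneg ht, exp_pos (-t)]
  have hsq : 0 ≤ (4 * a - z * t) ^ 2 / (8 * z) := by positivity
  have : (4 * a - z * t) ^ 2 / (8 * z) = 2 * a ^ 2 / z - a * t + z / 8 * t ^ 2 := by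
    field_simp; ring
  nlinarith [mul_le_mul_of_nonneg_left hcosh hz.le]

theorem integrableOn_exp_neg_mul_cosh_mul {z : ℝ} (hz : 0 < z) {f : ℝ → ℝ}
    (hf : Continuous f) {a : ℝ} (hbound : ∀ t, |f t| ≤ exp (a * |t|)) :
    IntegrableOn (fun t => exp (-z * cosh t) * f t) (Ioi 0) := by
  have hgauss : Integrable fun t : ℝ => exp (2 * a ^ 2 / z) * exp (-(z / 8) * t ^ 2) :=
    (integrable_exp_neg_mul_sq (by positivity)).const_mul _
  refine hgauss.integrableOn.mono' (by fun_prop : Continuous _).aestronglyMeasurable ?_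
  filter_upwards [ae_restrict_mem measurableSet_Ioi] with t (ht : 0 < t)
  calc ‖exp (-z * cosh t) * f t‖ ≤ exp (-z * cosh t) * exp (a * t) := by
        rw [norm_mul, norm_of_nonneg (exp_pos _).le, norm_eq_abs]
        refine mul_le_mul_of_nonneg_left ?_ (exp_pos _).le
        exact (hbound t).trans_eq (by rw [abs_of_pos ht])
    _ ≤ exp (2 * a ^ 2 / z) * exp (-(z / 8) * t ^ 2) := by
        rw [← exp_add, ← exp_add, exp_le_exp]
        linarith [mul_sub_mul_cosh_le hz a ht.le]

lemma abs_cosh_mul_cosh_le (ν t : ℝ) : |cosh t * cosh (ν * t)| ≤ exp ((1 + |ν|) * |t|) := by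
  calc |cosh t * cosh (ν * t)| = |cosh t| * |cosh (ν * t)| := abs_mul _ _
    _ ≤ exp |t| * exp |ν * t| :=
      mul_le_mul (abs_cosh_le_exp_abs t) (abs_cosh_le_exp_abs _) (abs_nonneg _) (exp_pos _).le
    _ = exp ((1 + |ν|) * |t|) := by rw [← exp_add, abs_mul]; ring_nf

lemma abs_sinh_mul_sinh_le (ν t : ℝ) : |sinh t * sinh (ν * t)| ≤ exp ((1 + |ν|) * |t|) := by
  calc |sinh t * sinh (ν * t)| = |sinh t| * |sinh (ν * t)| := abs_mul _ _
    _ ≤ exp |t| * exp |ν * t| :=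
      mul_le_mul (abs_sinh_le_exp_abs t) (abs_sinh_le_exp_abs _) (abs_nonneg _) (exp_pos _).le
    _ = exp ((1 + |ν|) * |t|) := by rw [← exp_add, abs_mul]; ring_nf

lemma integrableOn_besselK_integrand {z : ℝ} (hz : 0 < z) (ν : ℝ) :
    IntegrableOn (fun t => exp (-z * cosh t) * cosh (ν * t)) (Ioi 0) :=
  integrableOn_exp_neg_mul_cosh_mul hz (by fun_prop) fun t => by
    simpa [abs_mul] using abs_cosh_le_exp_abs (ν * t)

lemma hasDerivAt_besselK_integral (ν : ℝ) {z : ℝ} (hz : 0 < z) :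
    HasDerivAt (besselK ν) (-∫ t in Ioi 0, exp (-z * cosh t) * (cosh t * cosh (ν * t))) z := by
  set bound : ℝ → ℝ := fun t => exp (-(z / 2) * cosh t) * exp ((1 + |ν|) * |t|)
  have hbound_int : IntegrableOn bound (Ioi 0) :=
    integrableOn_exp_neg_mul_cosh_mul (half_pos hz) (by fun_prop) fun t =>
      (abs_of_pos (exp_pos _)).le
  have hderiv : ∀ t x, HasDerivAt (fun x => exp (-x * cosh t) * cosh (ν * t))
      (-(exp (-x * cosh t) * (cosh t * cosh (ν * t)))) x := fun t x => by
    refine ((((hasDerivAt_id x).neg.mul_const (cosh t)).exp).mul_const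
      (cosh (ν * t))).congr_deriv ?_
    simp only [Pi.neg_apply, id]
    ring
  have hle : ∀ t, ∀ x ∈ Metric.ball z (z / 2),
      ‖-(exp (-x * cosh t) * (cosh t * cosh (ν * t)))‖ ≤ bound t := fun t x hx => by
    have hx : z / 2 ≤ x := by
      rw [Metric.mem_ball, Real.dist_eq, abs_lt] at hx; linarith
    rw [norm_neg, norm_mul, norm_of_nonneg (exp_pos _).le, norm_eq_abs]
    refine mul_le_mul ?_ (abs_cosh_mul_cosh_le ν t) (abs_nonneg _) (exp_pos _).le
    exact exp_le_exp.2 (by nlinarith [cosh_pos t])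
  have key := hasDerivAt_integral_of_dominated_loc_of_deriv_le (μ := volume.restrict (Ioi 0))
    (F := fun x t => exp (-x * cosh t) * cosh (ν * t))
    (Metric.ball_mem_nhds z (half_pos hz))
    (Eventually.of_forall fun x => (by fun_prop : Continuous _).aestronglyMeasurable)
    (integrableOn_besselK_integrand hz ν) (by fun_prop : Continuous _).aestronglyMeasurable
    (Eventually.of_forall hle) hbound_int (Eventually.of_forall fun t x _ => hderiv t x)
  rw [← integral_neg]
  exact key.2

lemma integrableOn_sinh_mul_sinh_integrand {z : ℝ} (hz : 0 < z) (ν : ℝ) :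
    IntegrableOn (fun t => exp (-z * cosh t) * (sinh t * sinh (ν * t))) (Ioi 0) :=
  integrableOn_exp_neg_mul_cosh_mul hz (by fun_prop) (abs_sinh_mul_sinh_le ν)

lemma mul_integral_sinh_mul_sinh {z : ℝ} (hz : 0 < z) (ν : ℝ) :
    z * ∫ t in Ioi 0, exp (-z * cosh t) * (sinh t * sinh (ν * t)) = ν * besselK ν z := by
  set F : ℝ → ℝ := fun t => exp (-z * cosh t) * sinh (ν * t)
  set F' : ℝ → ℝ := fun t => ν * (exp (-z * cosh t) * cosh (ν * t)) -
    z * (exp (-z * cosh t) * (sinh t * sinh (ν * t)))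
  have hderiv : ∀ t, HasDerivAt F (F' t) t := fun t => by
    refine ((((hasDerivAt_cosh t).const_mul (-z)).exp).mul
      ((hasDerivAt_id t).const_mul ν).sinh).congr_deriv ?_
    simp only [F', id, mul_one]
    ring
  have hF'_int : IntegrableOn F' (Ioi 0) :=
    ((integrableOn_besselK_integrand hz ν).const_mul ν).sub
      ((integrableOn_sinh_mul_sinh_integrand hz ν).const_mul z)
  have hF_int : IntegrableOn F (Ioi 0) :=
    integrableOn_exp_neg_mul_cosh_mul hz (by fun_prop) fun t => by
      simpa [abs_mul] using abs_sinh_le_exp_abs (ν * t)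
  have hF_lim : Tendsto F atTop (𝓝 0) :=
    tendsto_zero_of_hasDerivAt_of_integrableOn_Ioi (fun t _ => hderiv t) hF'_int hF_int
  have hFTC : ∫ t in Ioi 0, F' t = 0 :=
    (integral_Ioi_of_hasDerivAt_of_tendsto' (fun t _ => hderiv t) hF'_int hF_lim).trans
      (by simp [F])
  rw [integral_sub ((integrableOn_besselK_integrand hz ν).const_mul ν)
    ((integrableOn_sinh_mul_sinh_integrand hz ν).const_mul z), integral_const_mul,
    integral_const_mul] at hFTC
  unfold besselK
  linarith

lemma besselK_neg (ν z : ℝ) : besselK (-ν) z = besselK ν z := by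
  simp only [besselK, neg_mul, cosh_neg]

lemma hasDerivAt_besselK (ν : ℝ) {z : ℝ} (hz : 0 < z) :
    HasDerivAt (besselK ν) (-besselK (ν - 1) z - ν / z * besselK ν z) z := by
  convert hasDerivAt_besselK_integral ν hz using 1
  have hsplit : ∫ t in Ioi 0, exp (-z * cosh t) * (cosh t * cosh (ν * t)) =
      besselK (ν - 1) z + ∫ t in Ioi 0, exp (-z * cosh t) * (sinh t * sinh (ν * t)) := by
    rw [besselK, ← integral_add (integrableOn_besselK_integrand hz _)
      (integrableOn_sinh_mul_sinh_integrand hz ν)]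
    congr with t
    rw [sub_mul, one_mul, cosh_sub]
    ring
  rw [hsplit, div_mul_eq_mul_div, ← mul_integral_sinh_mul_sinh hz ν,
    mul_div_cancel_left₀ _ hz.ne']
  ring

theorem hasDerivAt_sqrt_mul_besselK {ν : ℝ} (hν : 0 < ν) {x : ℝ} (hx : 0 < x) :
    HasDerivAt (fun x => √x * besselK ν (2 * ν * x ^ (1 / (2 * ν))))
      (-(x ^ (1 / (2 * ν) - 1 / 2)) * besselK (1 - ν) (2 * ν * x ^ (1 / (2 * ν)))) x := by
  set p := 1 / (2 * ν)
  set z := 2 * ν * x ^ p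
  have hz : 0 < z := by positivity
  have hinner : HasDerivAt (fun x => 2 * ν * x ^ p) (x ^ (p - 1)) x := by
    refine ((hasDerivAt_rpow_const (Or.inl hx.ne')).const_mul (2 * ν)).congr_deriv ?_
    rw [← mul_assoc, mul_one_div_cancel (by positivity), one_mul]
  have hprod := (hasDerivAt_sqrt hx.ne').mul ((hasDerivAt_besselK ν hz).comp x hinner)
  have hK : besselK (ν - 1) z = besselK (1 - ν) z := by rw [← besselK_neg, neg_sub]
  have hsqrt_mul : √x * x ^ (p - 1) = x ^ (p - 1 / 2) := by
    rw [sqrt_eq_rpow, ← rpow_add hx]; congr 1; ring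
  have hz_eq : z = 2 * ν * (x ^ (p - 1 / 2) * √x) := by
    rw [sqrt_eq_rpow, ← rpow_add hx, sub_add_cancel]
  have hs : 0 < √x := sqrt_pos.2 hx
  have hB : 0 < x ^ (p - 1) := rpow_pos_of_pos hx _
  refine hprod.congr_deriv ?_
  simp only [Function.comp_apply]
  rw [hK]
  set K := besselK ν z
  set K1 := besselK (1 - ν) z
  rw [hz_eq, ← hsqrt_mul]
  field_simp
  ring

/-- for `β > 0`, the derivative of
`y(x) = √x · K(1/(β+2), (2/(β+2)) x^((β+2)/2))` on `(0,∞)` is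
`y′(x) = −x^((β+1)/2) · K((β+1)/(β+2), (2/(β+2)) x^((β+2)/2))`. -/
theorem stmt5 (β : ℝ) (hβ : 0 < β) :
    ∀ x ∈ Ioi (0 : ℝ),
      HasDerivAt (fun x : ℝ =>
          Real.sqrt x * besselK (1 / (β + 2)) (2 / (β + 2) * x ^ ((β + 2) / 2)))
        (-(x ^ ((β + 1) / 2)) *
          besselK ((β + 1) / (β + 2)) (2 / (β + 2) * x ^ ((β + 2) / 2))) x := by
  intro x hx
  have hβ2 : 0 < β + 2 := by linarith
  rw [show 2 / (β + 2) = 2 * (1 / (β + 2)) by ring,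
    show (β + 2) / 2 = 1 / (2 * (1 / (β + 2))) by field_simp,
    show (β + 1) / 2 = 1 / (2 * (1 / (β + 2))) - 1 / 2 by field_simp; ring,
    show (β + 1) / (β + 2) = 1 - 1 / (β + 2) by field_simp; ring]
  exact hasDerivAt_sqrt_mul_besselK (by positivity) hx
end

section
/- Define v : ℝ → ℝ by v(x) := exp(−x²/2)·π^(−1/2)·∫₀^∞ exp(−t² − 2xt)·t^(−1/2) dt, and set v₋(x) := v(−x) and v₊ := v. Then the Wronskian at the origin equals √2, i.e. v₋′(0)·v₊(0) − v₋(0)·v₊′(0) = −2·v(0)·v′(0) = √2. -/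
/-!
Write `v(x) = e^(−x²/2) π^(−1/2) G(x)` with `G(x) = ∫₀^∞ e^(−t² − 2xt) t^(−1/2) dt`. At the origin
`G(0) = Γ(1/4)/2` and, differentiating under the integral sign, `G′(0) = −2 ∫₀^∞ e^(−t²) t^(1/2) dt
= −Γ(3/4)`, while the Gaussian prefactor has zero derivative there. Hence
`−2 v(0) v′(0) = Γ(1/4) Γ(3/4) / π = 1 / sin(π/4) = √2` by Euler's reflection formula, and the
Wronskian reduces to `−2 v(0) v′(0)` because `v₋ = v ∘ neg`.
-/

open Set Real

/-- `v(x) = e^(−x²/2) · H_{−1/2}(x)` via the integral representation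
`H_{−1/2}(x) = π^(−1/2) ∫₀^∞ e^(−t² − 2xt) t^(−1/2) dt`. -/
noncomputable def vFun (x : ℝ) : ℝ :=
  Real.exp (-x ^ 2 / 2) * π ^ (-(1 / 2) : ℝ) *
    ∫ t in Set.Ioi (0 : ℝ), Real.exp (-t ^ 2 - 2 * x * t) * t ^ (-(1 / 2) : ℝ)

/-- The solution decaying at `−∞`: `v₋(x) = v(−x)`. -/
noncomputable def vMinus (x : ℝ) : ℝ := vFun (-x)

open MeasureTheory

noncomputable def gaussLaplace (s x : ℝ) : ℝ :=
  ∫ t in Ioi (0 : ℝ), exp (-t ^ 2 - 2 * x * t) * t ^ s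

lemma exp_neg_sq_sub_mul_le (x t : ℝ) :
    exp (-t ^ 2 - 2 * x * t) ≤ exp (2 * x ^ 2) * exp (-(1 / 2) * t ^ 2) := by
  rw [← exp_add]
  exact exp_le_exp.mpr (by nlinarith [sq_nonneg (t + 2 * x)])

lemma integrableOn_exp_neg_sq_sub_mul_mul_rpow {s : ℝ} (hs : -1 < s) (x : ℝ) :
    IntegrableOn (fun t ↦ exp (-t ^ 2 - 2 * x * t) * t ^ s) (Ioi 0) := by
  refine (((integrableOn_rpow_mul_exp_neg_mul_sq (b := 1 / 2) (by norm_num) hs).const_mul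
    (exp (2 * x ^ 2)))).mono' (by fun_prop) ?_
  filter_upwards [ae_restrict_mem measurableSet_Ioi] with t ht
  have ht_pow := rpow_nonneg (le_of_lt ht) s
  rw [norm_of_nonneg (by positivity), mul_comm (t ^ s), ← mul_assoc]
  exact mul_le_mul_of_nonneg_right (exp_neg_sq_sub_mul_le x t) ht_pow

lemma hasDerivAt_exp_neg_sq_sub_mul_mul_rpow (s : ℝ) {t : ℝ} (ht : t ≠ 0) (x : ℝ) :
    HasDerivAt (fun x ↦ exp (-t ^ 2 - 2 * x * t) * t ^ s)
      (-2 * (exp (-t ^ 2 - 2 * x * t) * t ^ (s + 1))) x := by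
  have hlin : HasDerivAt (fun x ↦ -t ^ 2 - 2 * x * t) (-2 * t) x := by
    simpa using ((hasDerivAt_id x).const_mul 2 |>.mul_const t).const_sub (-t ^ 2)
  refine (hlin.exp.mul_const (t ^ s)).congr_deriv ?_
  rw [rpow_add_one ht]
  ring

theorem hasDerivAt_gaussLaplace {s : ℝ} (hs : -1 < s) (x₀ : ℝ) :
    HasDerivAt (gaussLaplace s) (-2 * gaussLaplace (s + 1) x₀) x₀ := by
  set R := |x₀| + 1
  have h := hasDerivAt_integral_of_dominated_loc_of_deriv_le (μ := volume.restrict (Ioi 0))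
    (F := fun x t ↦ exp (-t ^ 2 - 2 * x * t) * t ^ s)
    (F' := fun x t ↦ -2 * (exp (-t ^ 2 - 2 * x * t) * t ^ (s + 1)))
    (bound := fun t ↦ 2 * exp (2 * R ^ 2) * (t ^ (s + 1) * exp (-(1 / 2) * t ^ 2)))
    (Metric.ball_mem_nhds x₀ one_pos) (.of_forall fun _ ↦ by fun_prop)
    (integrableOn_exp_neg_sq_sub_mul_mul_rpow hs x₀) (by fun_prop) ?_
    ((integrableOn_rpow_mul_exp_neg_mul_sq (b := 1 / 2) (by norm_num) (by linarith)).const_mul _) ?_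
  · rw [gaussLaplace, ← integral_const_mul]
    exact h.2
  · filter_upwards [ae_restrict_mem measurableSet_Ioi] with t ht x hx
    have hxR : x ^ 2 ≤ R ^ 2 := by
      rw [Metric.mem_ball, dist_eq] at hx
      exact sq_le_sq' (by linarith [neg_abs_le x₀, abs_sub_lt_iff.mp hx])
        (by linarith [le_abs_self x₀, abs_sub_lt_iff.mp hx])
    have ht_pow := rpow_nonneg (le_of_lt ht) (s + 1)
    rw [norm_mul, norm_neg, norm_two, norm_of_nonneg (by positivity)]
    calc 2 * (exp (-t ^ 2 - 2 * x * t) * t ^ (s + 1))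
        ≤ 2 * (exp (2 * x ^ 2) * exp (-(1 / 2) * t ^ 2) * t ^ (s + 1)) := by
          gcongr; exact exp_neg_sq_sub_mul_le x t
      _ ≤ 2 * (exp (2 * R ^ 2) * exp (-(1 / 2) * t ^ 2) * t ^ (s + 1)) := by gcongr
      _ = _ := by ring
  · filter_upwards [ae_restrict_mem measurableSet_Ioi] with t ht x _
    exact hasDerivAt_exp_neg_sq_sub_mul_mul_rpow s (ne_of_gt ht) x

theorem gaussLaplace_zero {s : ℝ} (hs : -1 < s) :
    gaussLaplace s 0 = Gamma ((s + 1) / 2) / 2 := by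
  rw [gaussLaplace, div_eq_inv_mul, ← one_div, ← integral_rpow_mul_exp_neg_rpow two_pos hs]
  refine setIntegral_congr_fun measurableSet_Ioi fun t _ ↦ ?_
  simp [mul_comm]

lemma Gamma_one_quarter_mul_Gamma_three_quarters : Gamma (1 / 4) * Gamma (3 / 4) = π * √2 := by
  have h := Gamma_mul_Gamma_one_sub (1 / 4)
  rw [show π * (1 / 4) = π / 4 by ring, sin_pi_div_four] at h
  rw [show (3 / 4 : ℝ) = 1 - 1 / 4 by norm_num, h]
  field_simp
  norm_num

lemma vFun_zero : vFun 0 = π ^ (-(1 / 2) : ℝ) * (Gamma (1 / 4) / 2) := by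
  rw [vFun, ← gaussLaplace, gaussLaplace_zero (by norm_num)]
  norm_num

lemma hasDerivAt_vFun_zero : HasDerivAt vFun (-(π ^ (-(1 / 2) : ℝ) * Gamma (3 / 4))) 0 := by
  have hgauss : HasDerivAt (fun x : ℝ ↦ exp (-x ^ 2 / 2) * π ^ (-(1 / 2) : ℝ)) 0 0 := by
    simpa using (((hasDerivAt_pow 2 (0 : ℝ)).neg.div_const 2).exp.mul_const (π ^ (-(1 / 2) : ℝ)))
  refine (hgauss.mul (hasDerivAt_gaussLaplace (s := -(1 / 2)) (by norm_num) 0)).congr_deriv ?_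
  rw [gaussLaplace_zero (s := -(1 / 2) + 1) (by norm_num)]
  norm_num
  left
  ring

lemma deriv_vMinus_zero : deriv vMinus 0 = -deriv vFun 0 := by
  rw [show vMinus = fun x ↦ vFun (-x) from rfl, deriv_comp_neg, neg_zero]

/-- the Wronskian at the origin of the two decaying solutions of the
harmonic oscillator equals `√2`:
`v₋′(0) v₊(0) − v₋(0) v₊′(0) = −2 v(0) v′(0) = √2`. -/
theorem stmt12 :
    deriv vMinus 0 * vFun 0 - vMinus 0 * deriv vFun 0 = -2 * vFun 0 * deriv vFun 0 ∧
    -2 * vFun 0 * deriv vFun 0 = Real.sqrt 2 := by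
  have hvMinus : vMinus 0 = vFun 0 := by simp [vMinus]
  refine ⟨by rw [deriv_vMinus_zero, hvMinus]; ring, ?_⟩
  have hpi : (π ^ (-(1 / 2) : ℝ)) ^ 2 = π⁻¹ := by
    rw [← rpow_natCast, ← rpow_mul pi_pos.le]; norm_num [rpow_neg_one]
  rw [vFun_zero, hasDerivAt_vFun_zero.deriv]
  calc -2 * (π ^ (-(1 / 2) : ℝ) * (Gamma (1 / 4) / 2)) * -(π ^ (-(1 / 2) : ℝ) * Gamma (3 / 4))
      = (π ^ (-(1 / 2) : ℝ)) ^ 2 * (Gamma (1 / 4) * Gamma (3 / 4)) := by ring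
    _ = √2 := by
      rw [hpi, Gamma_one_quarter_mul_Gamma_three_quarters, ← mul_assoc,
        inv_mul_cancel₀ pi_ne_zero, one_mul]
end

section
/- Let α > −1. Define w : ℝ → ℝ by w(x) := exp(−x²/2)·(1/Γ((1+α)/2))·∫₀^∞ exp(−t² − 2xt)·t^((α−1)/2) dt, where Γ is the real Gamma function. Then w is twice differentiable on ℝ and satisfies w″(x) = (x² + α)·w(x) for every real x. -/
/-!
Write `I_p(x) = ∫₀^∞ e^(-t² - 2xt) t^p dt`, so that `w = c e^(-x²/2) I_p` with `p = (α - 1)/2`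
and `c = 1/Γ((1 + α)/2)`.
Differentiating under the integral gives `I_p' = -2 I_{p+1}`, and integrating
`d/dt (e^(-t² - 2xt) t^(p+1))` over `(0, ∞)` gives `4 I_{p+2} + 4x I_{p+1} = 2(p + 1) I_p`.
Two applications of the product rule then express `w''` through `I_p, I_{p+1}, I_{p+2}`,
and this recurrence collapses the result to `(x² + α) w`.
-/

open Set Real MeasureTheory Filter Metric Topology

noncomputable def hermiteIntegral (p x : ℝ) : ℝ :=
  ∫ t in Ioi (0 : ℝ), exp (-t ^ 2 - 2 * x * t) * t ^ p

lemma exp_neg_sq_sub_le (x t : ℝ) :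
    exp (-t ^ 2 - 2 * x * t) ≤ exp ((1 - 2 * x) ^ 2 / 4) * exp (-t) := by
  rw [← exp_add]
  exact exp_le_exp.2 (by nlinarith [sq_nonneg (t - (1 - 2 * x) / 2)])

lemma continuousOn_hermiteIntegrand (p x : ℝ) :
    ContinuousOn (fun t : ℝ => exp (-t ^ 2 - 2 * x * t) * t ^ p) (Ioi 0) := by
  refine (Continuous.continuousOn (by fun_prop)).mul fun t ht => ?_
  exact (continuousAt_rpow_const t p (Or.inl (ne_of_gt ht))).continuousWithinAt

lemma aestronglyMeasurable_hermiteIntegrand (p x : ℝ) :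
    AEStronglyMeasurable (fun t : ℝ => exp (-t ^ 2 - 2 * x * t) * t ^ p)
      (volume.restrict (Ioi 0)) :=
  (continuousOn_hermiteIntegrand p x).aestronglyMeasurable measurableSet_Ioi

/-- Domination by a multiple of the Gamma integrand `e^(-t) t^p`. -/
lemma integrableOn_hermiteIntegrand {p : ℝ} (hp : -1 < p) (x : ℝ) :
    IntegrableOn (fun t : ℝ => exp (-t ^ 2 - 2 * x * t) * t ^ p) (Ioi 0) := by
  have hGamma := (GammaIntegral_convergent (s := p + 1) (by linarith)).const_mul
    (exp ((1 - 2 * x) ^ 2 / 4))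
  simp only [add_sub_cancel_right] at hGamma
  refine hGamma.mono' (aestronglyMeasurable_hermiteIntegrand p x) ?_
  filter_upwards [ae_restrict_mem measurableSet_Ioi] with t (ht : 0 < t)
  rw [norm_of_nonneg (by positivity), ← mul_assoc]
  exact mul_le_mul_of_nonneg_right (exp_neg_sq_sub_le x t) (rpow_nonneg ht.le p)

lemma hasDerivAt_hermiteIntegral {p : ℝ} (hp : -1 < p) (x₀ : ℝ) :
    HasDerivAt (hermiteIntegral p) (-2 * hermiteIntegral (p + 1) x₀) x₀ := by
  set R := |x₀| + 1
  have hbound := (integrableOn_hermiteIntegrand (p := p + 1) (by linarith) (-R)).const_mul 2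
  have key := hasDerivAt_integral_of_dominated_loc_of_deriv_le
    (F := fun x t => exp (-t ^ 2 - 2 * x * t) * t ^ p)
    (F' := fun x t => -2 * (exp (-t ^ 2 - 2 * x * t) * t ^ (p + 1)))
    (μ := volume.restrict (Ioi 0)) (x₀ := x₀) (ball_mem_nhds x₀ one_pos)
    (Eventually.of_forall fun x => aestronglyMeasurable_hermiteIntegrand p x)
    (integrableOn_hermiteIntegrand hp x₀)
    ((aestronglyMeasurable_hermiteIntegrand (p + 1) x₀).const_mul (-2)) ?_ hbound ?_
  · rw [hermiteIntegral, ← integral_const_mul]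
    exact key.2
  · filter_upwards [ae_restrict_mem measurableSet_Ioi] with t (ht : 0 < t) x hx
    have hxR : -x ≤ R := by
      have := abs_sub_abs_le_abs_sub x x₀
      rw [mem_ball, dist_eq] at hx
      linarith [neg_le_abs x]
    have hexp : exp (-t ^ 2 - 2 * x * t) ≤ exp (-t ^ 2 - 2 * -R * t) :=
      exp_le_exp.2 (by nlinarith)
    rw [norm_mul, norm_neg, Real.norm_ofNat,
      norm_of_nonneg (by positivity : 0 ≤ exp (-t ^ 2 - 2 * x * t) * t ^ (p + 1))]
    gcongr
  · filter_upwards [ae_restrict_mem measurableSet_Ioi] with t (ht : 0 < t) x _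
    have hlin : HasDerivAt (fun x : ℝ => -t ^ 2 - 2 * x * t) (-2 * t) x := by
      simpa using (((hasDerivAt_id x).const_mul 2).mul_const t).const_sub (-t ^ 2)
    refine (hlin.exp.mul_const (t ^ p)).congr_deriv ?_
    rw [rpow_add_one ht.ne']
    ring

lemma tendsto_hermiteIntegrand_atTop (q x : ℝ) :
    Tendsto (fun t : ℝ => exp (-t ^ 2 - 2 * x * t) * t ^ q) atTop (𝓝 0) := by
  have hdecay := (tendsto_rpow_mul_exp_neg_mul_atTop_nhds_zero q 1 one_pos).const_mul
    (exp ((1 - 2 * x) ^ 2 / 4))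
  rw [mul_zero] at hdecay
  refine squeeze_zero' ?_ ?_ hdecay
  · filter_upwards [eventually_gt_atTop 0] with t ht
    positivity
  · filter_upwards [eventually_gt_atTop 0] with t ht
    rw [neg_one_mul, mul_comm (t ^ q), ← mul_assoc]
    exact mul_le_mul_of_nonneg_right (exp_neg_sq_sub_le x t) (rpow_nonneg ht.le q)

/-- Integration by parts against `d/dt (e^(-t² - 2xt) t^(p+1))`, whose boundary terms vanish. -/
lemma hermiteIntegral_recurrence {p : ℝ} (hp : -1 < p) (x : ℝ) :
    4 * hermiteIntegral (p + 2) x + 4 * x * hermiteIntegral (p + 1) x =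
      2 * (p + 1) * hermiteIntegral p x := by
  set E : ℝ → ℝ := fun t => exp (-t ^ 2 - 2 * x * t)
  have hI : ∀ q : ℝ, -1 < q → IntegrableOn (fun t => E t * t ^ q) (Ioi 0) :=
    fun q hq => integrableOn_hermiteIntegrand hq x
  have hderiv : ∀ t ∈ Ioi (0 : ℝ), HasDerivAt (fun t => E t * t ^ (p + 1))
      ((p + 1) * (E t * t ^ p) - 2 * (E t * t ^ (p + 2)) - 2 * x * (E t * t ^ (p + 1))) t := by
    intro t (ht : 0 < t)
    have hpoly : HasDerivAt (fun t : ℝ => -t ^ 2 - 2 * x * t) (-(2 * t) - 2 * x) t :=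
      ((hasDerivAt_pow 2 t).neg.sub ((hasDerivAt_id t).const_mul (2 * x))).congr_deriv (by simp)
    refine (hpoly.exp.mul (hasDerivAt_rpow_const (p := p + 1) (Or.inl ht.ne'))).congr_deriv ?_
    rw [add_sub_cancel_right, show p + 2 = p + 1 + 1 by ring, rpow_add_one ht.ne' (p + 1),
      rpow_add_one ht.ne' p]
    ring
  have hcont : ContinuousWithinAt (fun t => E t * t ^ (p + 1)) (Ici 0) 0 :=
    ((continuous_exp.comp (by fun_prop)).continuousAt.mul
      (continuousAt_rpow_const 0 (p + 1) (Or.inr (by linarith)))).continuousWithinAt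
  have h0 := (hI p hp).const_mul (p + 1)
  have h2 := (hI (p + 2) (by linarith)).const_mul 2
  have h1 := (hI (p + 1) (by linarith)).const_mul (2 * x)
  have hibp := integral_Ioi_of_hasDerivAt_of_tendsto hcont hderiv ((h0.sub h2).sub h1)
    (tendsto_hermiteIntegrand_atTop (p + 1) x)
  rw [zero_rpow (by linarith), mul_zero, sub_zero,
    integral_sub (f := fun t => (p + 1) * (E t * t ^ p) - 2 * (E t * t ^ (p + 2))) (h0.sub h2) h1,
    integral_sub h0 h2] at hibp
  simp only [integral_const_mul] at hibp
  simp only [hermiteIntegral]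
  linear_combination -2 * hibp

lemma hasDerivAt_exp_neg_sq_div_two_mul {f : ℝ → ℝ} {f' x : ℝ} (c : ℝ)
    (hf : HasDerivAt f f' x) :
    HasDerivAt (fun x => exp (-x ^ 2 / 2) * c * f x) (exp (-x ^ 2 / 2) * c * (f' - x * f x)) x := by
  have hgauss : HasDerivAt (fun x : ℝ => -x ^ 2 / 2) (-x) x :=
    ((hasDerivAt_pow 2 x).neg.div_const 2).congr_deriv (by ring)
  exact ((hgauss.exp.mul_const c).mul hf).congr_deriv (by ring)

/-- for `α > −1`, the function
`w(x) = e^(−x²/2) · (1/Γ((1+α)/2)) ∫₀^∞ e^(−t² − 2xt) t^((α−1)/2) dt`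
is twice differentiable on `ℝ` and satisfies `w″ = (x² + α) w`. -/
theorem stmt13 (α : ℝ) (hα : -1 < α) :
    ∃ w' : ℝ → ℝ,
      (∀ x : ℝ, HasDerivAt
        (fun x : ℝ => Real.exp (-x ^ 2 / 2) * (1 / Real.Gamma ((1 + α) / 2)) *
          ∫ t in Set.Ioi (0 : ℝ), Real.exp (-t ^ 2 - 2 * x * t) * t ^ ((α - 1) / 2))
        (w' x) x) ∧
      (∀ x : ℝ, HasDerivAt w'
        ((x ^ 2 + α) *
          (Real.exp (-x ^ 2 / 2) * (1 / Real.Gamma ((1 + α) / 2)) *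
            ∫ t in Set.Ioi (0 : ℝ), Real.exp (-t ^ 2 - 2 * x * t) * t ^ ((α - 1) / 2)))
        x) := by
  have hp : -1 < (α - 1) / 2 := by linarith
  set p := (α - 1) / 2
  set c := 1 / Gamma ((1 + α) / 2)
  have hI := hasDerivAt_hermiteIntegral hp
  have hI₁ := hasDerivAt_hermiteIntegral (p := p + 1) (by linarith)
  refine ⟨fun x => exp (-x ^ 2 / 2) * c *
      (-2 * hermiteIntegral (p + 1) x - x * hermiteIntegral p x),
    fun x => (hasDerivAt_exp_neg_sq_div_two_mul c (hI x)).congr_deriv (by ring), fun x => ?_⟩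
  have hw' := hasDerivAt_exp_neg_sq_div_two_mul c
    (((hI₁ x).const_mul (-2)).sub ((hasDerivAt_id x).mul (hI x)))
  refine hw'.congr_deriv ?_
  have hrec := hermiteIntegral_recurrence hp x
  rw [show 2 * (p + 1) = 1 + α by ring] at hrec
  rw [add_assoc, one_add_one_eq_two]
  simp only [Pi.sub_apply, Pi.mul_apply, id]
  change _ = (x ^ 2 + α) * (exp (-x ^ 2 / 2) * c * hermiteIntegral p x)
  linear_combination (exp (-x ^ 2 / 2) * c) * hrec
end
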